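/- arXiv:1602.04163 — 6 statements merged into one kernel-verified Lean document; each statement's English description precedes it below -/
import Mathlib

section
/- Given a gerbal cocycle with functions h_{ik}: U_{ik} → H and h_{ikm} = τ'(j_{ikm}): U_{ikm} → H satisfying h_{im}(u) = h_{ikm}(u) h_{ik}(u) h_{km}(u), the second gerbe relation holds: h_{ijm}(u) · α_{g_{ij}(u)}(h_{jkm}(u)) = h_{ikm}(u) · h_{ijk}(u) for all u in the quadruple overlap, where g_{ij} = τ(h_{ij}). -/
/-- The second gerbe relation: `h_{ijm} α_{g_{ij}}(h_{jkm}) = h_{ikm} h_{ijk}` where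
`h_{abc} = τ'(j_{abc})` and `g_{ij} = τ(h_{ij})`, given the gerbal cocycle relations
`h_{am}(u) = τ'(j_{akm}(u)) h_{ak}(u) h_{km}(u)`. -/
theorem second_gerbe_relation {G H J : Type*} [Group G] [Group H] [Group J]
    (τ : H →* G) (α : G →* MulAut H) (τ' : J →* H) (α' : H →* MulAut J)
    (peiffer1 : ∀ (g : G) (h : H), τ (α g h) = g * τ h * g⁻¹)
    (peiffer2 : ∀ h h' : H, α (τ h) h' = h * h' * h⁻¹)
    (peiffer1' : ∀ (h : H) (j : J), τ' (α' h j) = h * τ' j * h⁻¹)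
    (peiffer2' : ∀ j j' : J, α' (τ' j) j' = j * j' * j⁻¹)
    {U : Type*} (u : U)
    (hij hjk hik him hjm hkm : U → H) (jijk jijm jikm jjkm : U → J)
    (rijk : hik u = τ' (jijk u) * hij u * hjk u)
    (rijm : him u = τ' (jijm u) * hij u * hjm u)
    (rikm : him u = τ' (jikm u) * hik u * hkm u)
    (rjkm : hjm u = τ' (jjkm u) * hjk u * hkm u) :
    τ' (jijm u) * α (τ (hij u)) (τ' (jjkm u)) = τ' (jikm u) * τ' (jijk u) := by
  rw [peiffer2]
  have key : τ' (jijm u) * (hij u * τ' (jjkm u) * (hij u)⁻¹) * (hij u * hjk u * hkm u)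
      = τ' (jikm u) * τ' (jijk u) * (hij u * hjk u * hkm u) := by
    calc τ' (jijm u) * (hij u * τ' (jjkm u) * (hij u)⁻¹) * (hij u * hjk u * hkm u)
        = τ' (jijm u) * hij u * (τ' (jjkm u) * hjk u * hkm u) := by group
      _ = τ' (jijm u) * hij u * hjm u := by rw [← rjkm]
      _ = him u := rijm.symm
      _ = τ' (jikm u) * hik u * hkm u := rikm
      _ = τ' (jikm u) * (τ' (jijk u) * hij u * hjk u) * hkm u := by rw [rijk]
      _ = τ' (jikm u) * τ' (jijk u) * (hij u * hjk u * hkm u) := by group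
  exact mul_right_cancel key
end

section
/- Naturality of T_{ikm}: for any path γ: u → v lying in the triple overlap, θ_{im}(γ) ∘ T_{ikm}(u) = T_{ikm}(v) ∘ (θ_{ik}(γ)θ_{km}(γ)) in the morphism group H ⋊_α G, where T_{ikm}(u) = (h_{ikm}(u), g_{ik}(u)g_{km}(u)). -/
/-- Semidirect-product multiplication on pairs: `(h₂,g₂)(h₁,g₁) = (h₂ α_{g₂}(h₁), g₂g₁)`. -/
def cmMul {G H : Type*} [Group G] [Group H] (α : G →* MulAut H) (p q : H × G) : H × G :=
  (p.1 * α p.2 q.1, p.2 * q.2)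

/-- Source map `s(h,g) = g`. -/
def cmSrc {G H : Type*} (p : H × G) : G := p.2

/-- Target map `t(h,g) = τ(h) g`. -/
def cmTgt {G H : Type*} [Group G] [Group H] (τ : H →* G) (p : H × G) : G := τ p.1 * p.2

/-- Categorical composition `(h₂,g₂) ∘ (h₁,g₁) = (h₂h₁, g₁)` (meaningful when `g₂ = τ(h₁) g₁`). -/
def cmComp {G H : Type*} [Group H] (p q : H × G) : H × G := (p.1 * q.1, q.2)

/-- The transition assignment on a path from `u` to `v`:
`θ(γ) = (f(γ₁) f(γ₀)⁻¹, τ(f(γ₀)))`. -/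
def cmTheta {G H U : Type*} [Group G] [Group H] (τ : H →* G) (f : U → H) (u v : U) : H × G :=
  (f v * (f u)⁻¹, τ (f u))

/-- Naturality of `T_{ikm}`: for a path `γ : u → v` in the triple overlap,
`θ_{im}(γ) ∘ T_{ikm}(u) = T_{ikm}(v) ∘ (θ_{ik}(γ)θ_{km}(γ))`, and both composites
are defined. Here `T_{ikm}(w) = (h_{ikm}(w), g_{ik}(w) g_{km}(w))`. -/
theorem T_natural {G H : Type*} [Group G] [Group H]
    (τ : H →* G) (α : G →* MulAut H)
    (peiffer1 : ∀ (g : G) (h : H), τ (α g h) = g * τ h * g⁻¹)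
    (peiffer2 : ∀ h h' : H, α (τ h) h' = h * h' * h⁻¹)
    {U : Type*} (hik hkm him hikm : U → H)
    (gerbalH : ∀ w, him w = hikm w * hik w * hkm w)
    (gerbalG : ∀ w, τ (him w) = τ (hikm w) * (τ (hik w) * τ (hkm w))) :
    ∀ u v : U,
      cmTgt τ ((hikm u, τ (hik u) * τ (hkm u)) : H × G) = cmSrc (cmTheta τ him u v) ∧
      cmTgt τ (cmMul α (cmTheta τ hik u v) (cmTheta τ hkm u v)) =
        cmSrc ((hikm v, τ (hik v) * τ (hkm v)) : H × G) ∧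
      cmComp (cmTheta τ him u v) ((hikm u, τ (hik u) * τ (hkm u)) : H × G) =
        cmComp ((hikm v, τ (hik v) * τ (hkm v)) : H × G)
          (cmMul α (cmTheta τ hik u v) (cmTheta τ hkm u v)) := by
  intro u v
  refine ⟨?_, ?_, ?_⟩
  · simp [cmTgt, cmSrc, cmTheta, ← mul_assoc, ← gerbalG]
  · simp [cmTgt, cmSrc, cmTheta, cmMul, peiffer1, map_mul, map_inv]
    group
  · simp only [cmComp, cmTheta, cmMul, Prod.mk.injEq, peiffer2, gerbalH, map_inv, mul_inv_rev]
    constructor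
    · group
    · trivial
end

section
/- Product relation for transition functors: Θ_{ikm}(γ) · θ_{ik}(γ) · θ_{km}(γ) = θ_{im}(γ) in H ⋊_α G, for any path γ from u to v in the triple overlap, where Θ_{ikm}(γ) = (h_{ikm}(v)h_{ikm}(u)⁻¹, τ(h_{ikm}(u))). -/
/-- Product relation for the transition functors:
`Θ_{ikm}(γ) θ_{ik}(γ) θ_{km}(γ) = θ_{im}(γ)` in `H ⋊_α G`, where
`Θ_{ikm}(γ) = (h_{ikm}(v) h_{ikm}(u)⁻¹, τ(h_{ikm}(u)))`. -/
theorem Theta_product {G H : Type*} [Group G] [Group H]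
    (τ : H →* G) (α : G →* MulAut H)
    (peiffer1 : ∀ (g : G) (h : H), τ (α g h) = g * τ h * g⁻¹)
    (peiffer2 : ∀ h h' : H, α (τ h) h' = h * h' * h⁻¹)
    {U : Type*} (hik hkm him hikm : U → H)
    (gerbalH : ∀ w, him w = hikm w * hik w * hkm w)
    (gerbalG : ∀ w, τ (him w) = τ (hikm w) * (τ (hik w) * τ (hkm w))) :
    ∀ u v : U,
      cmMul α (cmMul α (cmTheta τ hikm u v) (cmTheta τ hik u v)) (cmTheta τ hkm u v) =
        cmTheta τ him u v := by
  intro u v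
  simp only [cmMul, cmTheta, Prod.mk.injEq]
  constructor
  · rw [map_mul α, MulAut.mul_apply]
    simp only [peiffer2]
    rw [gerbalH u, gerbalH v]
    group
  · rw [gerbalG u]
    group
end

section
/- J_H = {(τ'(j), ττ'(j')) : j, j' ∈ J} is a normal subgroup of H ⋊_α τ(H): for all h, h₀ ∈ H and j, j₁ ∈ J, (h, τ(h₀)) (τ'(j), ττ'(j₁)) (h, τ(h₀))⁻¹ = (τ'(α'_{hh₀}(j) α'_{hh₀}(j₁) α'_{h₀}(j₁⁻¹)), ττ'(α'_{h₀}(j₁))) ∈ J_H. -/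
/-!
Since `α ∘ τ` is conjugation in `H`, conjugating an element of `H ⋊[α] τ(H)` by another one is
computed by a word in `H` alone. The identity `τ' (α' h j) = h τ'(j) h⁻¹` turns the claimed
right-hand side into a word in `H` as well, and the two words agree in every group.
-/

section CrossedModule

variable {G H : Type*} [Group G] [Group H] {τ : H →* G} {α : G →* MulAut H}

theorem act_comp_eq_conj (hα : ∀ h h' : H, α (τ h) h' = h * h' * h⁻¹) (h : H) :
    α (τ h) = MulAut.conj h :=
  MulEquiv.ext (hα h)

theorem SemidirectProduct.conj_mk_tau (hα : ∀ h h' : H, α (τ h) h' = h * h' * h⁻¹)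
    (h h₀ x y : H) :
    (⟨h, τ h₀⟩ : H ⋊[α] G) * ⟨x, τ y⟩ * (⟨h, τ h₀⟩ : H ⋊[α] G)⁻¹ =
      ⟨h * (h₀ * x * h₀⁻¹) * ((h₀ * y * h₀⁻¹) * h⁻¹ * (h₀ * y * h₀⁻¹)⁻¹),
        τ (h₀ * y * h₀⁻¹)⟩ := by
  ext
  · simp only [SemidirectProduct.mul_left, SemidirectProduct.mul_right,
      SemidirectProduct.inv_left, ← map_inv, ← map_mul,
      act_comp_eq_conj hα, MulAut.conj_apply]
    group
  · simp only [SemidirectProduct.mul_right, SemidirectProduct.inv_right, map_mul, map_inv]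

end CrossedModule

theorem JH_normal_conjugation_general {G H J : Type*} [Group G] [Group H] [Group J]
    (τ : H →* G) (α : G →* MulAut H) (τ' : J →* H) (α' : H →* MulAut J)
    (peiffer2 : ∀ h h' : H, α (τ h) h' = h * h' * h⁻¹)
    (peiffer1' : ∀ (h : H) (j : J), τ' (α' h j) = h * τ' j * h⁻¹) :
    ∀ (h h₀ : H) (j j₁ : J),
      (⟨h, τ h₀⟩ : H ⋊[α] G) * ⟨τ' j, τ (τ' j₁)⟩ * (⟨h, τ h₀⟩ : H ⋊[α] G)⁻¹ =
        (⟨τ' (α' (h * h₀) j * α' (h * h₀) j₁ * α' h₀ j₁⁻¹),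
          τ (τ' (α' h₀ j₁))⟩ : H ⋊[α] G) ∧
      (⟨h, τ h₀⟩ : H ⋊[α] G) * ⟨τ' j, τ (τ' j₁)⟩ * (⟨h, τ h₀⟩ : H ⋊[α] G)⁻¹ ∈
        {p : H ⋊[α] G | ∃ j₂ j₂' : J, p = (⟨τ' j₂, τ (τ' j₂')⟩ : H ⋊[α] G)} := by
  intro h h₀ j j₁
  have conj_eq : (⟨h, τ h₀⟩ : H ⋊[α] G) * ⟨τ' j, τ (τ' j₁)⟩ * (⟨h, τ h₀⟩ : H ⋊[α] G)⁻¹ =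
      (⟨τ' (α' (h * h₀) j * α' (h * h₀) j₁ * α' h₀ j₁⁻¹),
        τ (τ' (α' h₀ j₁))⟩ : H ⋊[α] G) := by
    rw [SemidirectProduct.conj_mk_tau peiffer2]
    ext
    · simp only [map_mul τ', map_inv τ', peiffer1']
      group
    · rw [peiffer1']
  exact ⟨conj_eq, conj_eq ▸ ⟨_, _, rfl⟩⟩

/-- `J_H` is normal in `H ⋊_α τ(H)`: the conjugation formula
`(h, τ(h₀)) (τ'(j), ττ'(j₁)) (h, τ(h₀))⁻¹
  = (τ'(α'_{hh₀}(j) α'_{hh₀}(j₁) α'_{h₀}(j₁⁻¹)), ττ'(α'_{h₀}(j₁)))`,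
an element of `J_H`. -/
theorem JH_normal_conjugation {G H J : Type*} [Group G] [Group H] [Group J]
    (τ : H →* G) (α : G →* MulAut H) (τ' : J →* H) (α' : H →* MulAut J)
    (peiffer1 : ∀ (g : G) (h : H), τ (α g h) = g * τ h * g⁻¹)
    (peiffer2 : ∀ h h' : H, α (τ h) h' = h * h' * h⁻¹)
    (peiffer1' : ∀ (h : H) (j : J), τ' (α' h j) = h * τ' j * h⁻¹)
    (peiffer2' : ∀ j j' : J, α' (τ' j) j' = j * j' * j⁻¹) :
    ∀ (h h₀ : H) (j j₁ : J),
      (⟨h, τ h₀⟩ : H ⋊[α] G) * ⟨τ' j, τ (τ' j₁)⟩ * (⟨h, τ h₀⟩ : H ⋊[α] G)⁻¹ =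
        (⟨τ' (α' (h * h₀) j * α' (h * h₀) j₁ * α' h₀ j₁⁻¹),
          τ (τ' (α' h₀ j₁))⟩ : H ⋊[α] G) ∧
      (⟨h, τ h₀⟩ : H ⋊[α] G) * ⟨τ' j, τ (τ' j₁)⟩ * (⟨h, τ h₀⟩ : H ⋊[α] G)⁻¹ ∈
        {p : H ⋊[α] G | ∃ j₂ j₂' : J, p = (⟨τ' j₂, τ (τ' j₂')⟩ : H ⋊[α] G)} :=
  JH_normal_conjugation_general τ α τ' α' peiffer2 peiffer1'
end

section
/- Composition descends to the quotient modulo J_H: if f₁, f₂ ∈ H ⋊_α G are composable and f₁', f₂' ∈ J_H are such that f₁f₁' and f₂f₂' are composable, then (f₂f₂') ∘ (f₁f₁') = (f₂ ∘ f₁)(f₂' ∘ f₁'), and f₂' ∘ f₁' ∈ J_H; hence (f₂f₂') ∘ (f₁f₁') ≡ f₂ ∘ f₁ mod J_H. -/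
/-- Composition descends to the quotient modulo `J_H`: if `f₁, f₂` are composable and
`f₁', f₂' ∈ J_H` are such that `f₁f₁'` and `f₂f₂'` are composable, then
`(f₂f₂') ∘ (f₁f₁') = (f₂ ∘ f₁)(f₂' ∘ f₁')` and `f₂' ∘ f₁' ∈ J_H`. -/
theorem comp_descends {G H J : Type*} [Group G] [Group H] [Group J]
    (τ : H →* G) (α : G →* MulAut H) (τ' : J →* H) (α' : H →* MulAut J)
    (peiffer1 : ∀ (g : G) (h : H), τ (α g h) = g * τ h * g⁻¹)
    (peiffer2 : ∀ h h' : H, α (τ h) h' = h * h' * h⁻¹)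
    (peiffer1' : ∀ (h : H) (j : J), τ' (α' h j) = h * τ' j * h⁻¹)
    (peiffer2' : ∀ j j' : J, α' (τ' j) j' = j * j' * j⁻¹) :
    ∀ f₁ f₂ f₁' f₂' : H × G,
      (∃ j j' : J, f₁' = ((τ' j, τ (τ' j')) : H × G)) →
      (∃ j j' : J, f₂' = ((τ' j, τ (τ' j')) : H × G)) →
      cmTgt τ f₁ = cmSrc f₂ →
      cmTgt τ (cmMul α f₁ f₁') = cmSrc (cmMul α f₂ f₂') →
      cmComp (cmMul α f₂ f₂') (cmMul α f₁ f₁') =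
          cmMul α (cmComp f₂ f₁) (cmComp f₂' f₁') ∧
      (∃ j j' : J, cmComp f₂' f₁' = ((τ' j, τ (τ' j')) : H × G)) := by
  rintro ⟨h₁, g₁⟩ ⟨h₂, g₂⟩ _ _ ⟨j₁, j₁', rfl⟩ ⟨j₂, j₂', rfl⟩ hc _
  simp only [cmTgt, cmSrc] at hc
  constructor
  · simp only [cmComp, cmMul, Prod.mk.injEq]
    refine ⟨?_, trivial⟩
    have : α g₂ (τ' j₂) = h₁ * α g₁ (τ' j₂) * h₁⁻¹ := by
      rw [← hc, map_mul, MulAut.mul_apply, peiffer2]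
    rw [this, map_mul]
    group
  · exact ⟨j₂ * j₁, j₁', by simp [cmComp]⟩
end

section
/- The quotient Ḡ_τ with object group τ(H)/ττ'(J) and morphism group (H ⋊_α τ(H))/J_H, with source, target, identity and composition induced from the categorical group G, is itself a categorical group: source and target are group homomorphisms and composition is compatible with the group structure (interchange law holds in the quotient). -/
/-- The quotient `Ḡ_τ`, with object group `τ(H)/ττ'(J)` and morphism group
`(H ⋊_α τ(H))/J_H`, is a categorical group: source and target are group homomorphisms
which descend to the quotient, composition descends modulo `J_H`, and the interchange
law holds. -/
theorem quotient_categorical_group {G H J : Type*} [Group G] [Group H] [Group J]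
    (τ : H →* G) (α : G →* MulAut H) (τ' : J →* H) (α' : H →* MulAut J)
    (peiffer1 : ∀ (g : G) (h : H), τ (α g h) = g * τ h * g⁻¹)
    (peiffer2 : ∀ h h' : H, α (τ h) h' = h * h' * h⁻¹)
    (peiffer1' : ∀ (h : H) (j : J), τ' (α' h j) = h * τ' j * h⁻¹)
    (peiffer2' : ∀ j j' : J, α' (τ' j) j' = j * j' * j⁻¹) :
    (∀ f g : H × G, (∃ h : H, cmSrc f = τ h) → (∃ h : H, cmSrc g = τ h) →
        cmSrc (cmMul α f g) = cmSrc f * cmSrc g ∧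
        cmTgt τ (cmMul α f g) = cmTgt τ f * cmTgt τ g) ∧
    (∀ (f : H × G) (j j' : J),
        (∃ j₀ : J, cmSrc (cmMul α f ((τ' j, τ (τ' j')) : H × G)) = cmSrc f * τ (τ' j₀)) ∧
        (∃ j₀ : J, cmTgt τ (cmMul α f ((τ' j, τ (τ' j')) : H × G)) =
            cmTgt τ f * τ (τ' j₀))) ∧
    (∀ f₁ f₂ ψ₁ ψ₂ : H × G, cmTgt τ f₁ = cmSrc f₂ → cmTgt τ ψ₁ = cmSrc ψ₂ →
        cmComp (cmMul α f₂ ψ₂) (cmMul α f₁ ψ₁) =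
          cmMul α (cmComp f₂ f₁) (cmComp ψ₂ ψ₁)) ∧
    (∀ f₁ f₂ f₁' f₂' : H × G,
        (∃ h : H, cmSrc f₁ = τ h) → (∃ h : H, cmSrc f₂ = τ h) →
        cmTgt τ f₁ = cmSrc f₂ → cmTgt τ f₁' = cmSrc f₂' →
        (∃ j j' : J, f₁' = cmMul α f₁ ((τ' j, τ (τ' j')) : H × G)) →
        (∃ j j' : J, f₂' = cmMul α f₂ ((τ' j, τ (τ' j')) : H × G)) →
        ∃ j j' : J, cmComp f₂' f₁' =
            cmMul α (cmComp f₂ f₁) ((τ' j, τ (τ' j')) : H × G)) := by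
  refine ⟨?_, ?_, ?_, ?_⟩
  · intro f g _ _
    constructor
    · simp [cmSrc, cmMul]
    · simp only [cmTgt, cmMul, map_mul, peiffer1]
      group
  · intro f j j'
    constructor
    · exact ⟨j', by simp [cmSrc, cmMul]⟩
    · refine ⟨j * j', ?_⟩
      simp only [cmTgt, cmMul, map_mul, peiffer1]
      group
  · intro f₁ f₂ ψ₁ ψ₂ h1 _
    simp only [cmTgt, cmSrc] at h1
    simp only [cmComp, cmMul, Prod.mk.injEq, ← h1, map_mul, MulAut.mul_apply, peiffer2]
    constructor
    · group
    · trivial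
  · rintro f₁ f₂ f₁' f₂' _ _ h12 _ ⟨j₁, j₁', rfl⟩ ⟨j₂, j₂', rfl⟩
    refine ⟨j₂ * j₁, j₁', ?_⟩
    simp only [cmTgt, cmSrc] at h12
    simp only [cmComp, cmMul, Prod.mk.injEq, ← h12, map_mul, MulAut.mul_apply, peiffer2]
    constructor
    · group
    · trivial
end
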